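/- arXiv:2604.22567 — 2 statements merged into one kernel-verified Lean document; each statement's English description precedes it below -/
import Mathlib

section
/- Let ξ: [0,∞) → (-1,1) be continuous. Then there exists a sequence (A_j) of finite unions of disjoint measurable sets in ℝ² (each contained in a grid of boxes of side 1/R_j with R_j → ∞) such that for every ball B_r(x) ⊆ ℝ², |A_j ∩ B_r(x)| → ∫_{B_r(x)} (1 + ξ(‖y‖))/2 dy as j → ∞. -/
/-!
Cut the plane into half-open squares of side `1/R` and keep, in each square, its left part of
relative width `f = (1 + ξ ∘ ‖·‖)/2` evaluated at the lower-left corner. On every square inside a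
ball `B = B_r(x)` the kept area equals the integral of the step function `f ∘ snap`, so the
kept area in `B` differs from `∫_B f ∘ snap` by at most the area of the squares meeting both `B`
and its complement; these lie in the annulus `B \ B_{r - 2/R}(x)`, whose area tends to `0`. Finally
`∫_B f ∘ snap → ∫_B f` by dominated convergence, since `snap` moves points by at most `2/R`.
-/

open MeasureTheory Metric Filter Set Topology Function

theorem norm_setIntegral_le_of_setIntegral_cell_eq_zero {α ι : Type*} [MeasurableSpace α]
    [Countable ι] {μ : Measure α} {Q : ι → Set α} (hQ : ∀ i, MeasurableSet (Q i))
    (hdisj : Pairwise (Disjoint on Q)) (hcover : ∀ y, ∃ i, y ∈ Q i) {h : α → ℝ}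
    (hm : AEStronglyMeasurable h μ) {C : ℝ} (hC : ∀ y, ‖h y‖ ≤ C) {B D : Set α}
    (hB : μ B ≠ ⊤) (hD : μ D ≠ ⊤) (hzero : ∀ i, Q i ⊆ B → ∫ y in Q i, h y ∂μ = 0)
    (hboundary : ∀ i, ¬ Q i ⊆ B → B ∩ Q i ⊆ D) :
    ‖∫ y in B, h y ∂μ‖ ≤ C * μ.real D := by
  set inner := ⋃ i, ⋃ (_ : Q i ⊆ B), Q i
  have hinner : MeasurableSet inner := .iUnion fun i => .iUnion fun _ => hQ i
  have hinner_sub : inner ⊆ B := iUnion₂_subset fun _ hi => hi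
  have hint : IntegrableOn h B μ := Measure.integrableOn_of_bounded hB hm (.of_forall hC)
  have hinner_zero : ∫ y in inner, h y ∂μ = 0 := by
    rw [integral_iUnion (fun i => .iUnion fun _ => hQ i)
      (hdisj.mono fun i j => Disjoint.mono (iUnion_subset fun _ => subset_rfl)
        (iUnion_subset fun _ => subset_rfl)) (hint.mono_set hinner_sub)]
    refine (tsum_congr fun i => ?_).trans tsum_zero
    by_cases hi : Q i ⊆ B
    · simp [hi, hzero i hi]
    · simp [hi]
  have hrest : B \ inner ⊆ D := by
    rintro y ⟨hyB, hy⟩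
    obtain ⟨i, hi⟩ := hcover y
    have hiB : ¬ Q i ⊆ B := fun hiB => hy (mem_iUnion₂.mpr ⟨i, hiB, hi⟩)
    exact hboundary i hiB ⟨hyB, hi⟩
  rw [← integral_inter_add_sdiff hinner hint,
    inter_eq_right.mpr hinner_sub, hinner_zero, zero_add]
  calc ‖∫ y in B \ inner, h y ∂μ‖ ≤ C * μ.real (B \ inner) :=
        norm_setIntegral_le_of_norm_le_const ((measure_mono sdiff_subset).trans_lt hB.lt_top)
          fun y _ => hC y
    _ ≤ C * μ.real D := by
        obtain hα | ⟨⟨y⟩⟩ := isEmpty_or_nonempty α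
        · simp [Subsingleton.elim (B \ inner) ∅, Subsingleton.elim D ∅]
        · exact mul_le_mul_of_nonneg_left (measureReal_mono hrest hD)
            ((norm_nonneg _).trans (hC y))

theorem tendsto_measure_ball_sdiff_ball {X : Type*} [PseudoMetricSpace X] [MeasurableSpace X]
    [OpensMeasurableSpace X] {μ : Measure X} (x : X) {r : ℝ} (hr : μ (ball x r) ≠ ⊤) :
    Tendsto (fun δ => μ (ball x r \ ball x (r - δ))) (𝓝[>] 0) (𝓝 0) := by
  have hempty : ⋂ δ > (0 : ℝ), ball x r \ ball x (r - δ) = ∅ := by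
    refine eq_empty_of_forall_notMem fun y hy => ?_
    simp only [mem_iInter, Set.mem_sdiff, mem_ball, not_lt] at hy
    obtain ⟨hyr, -⟩ := hy 1 one_pos
    obtain ⟨-, hy'⟩ := hy ((r - dist y x) / 2) (by linarith)
    linarith
  rw [← measure_empty (μ := μ), ← hempty]
  exact tendsto_measure_biInter_gt
    (fun _ _ => (measurableSet_ball.diff measurableSet_ball).nullMeasurableSet)
    (fun δ δ' _ hδ => sdiff_subset_sdiff_right (ball_subset_ball (by linarith)))
    ⟨1, one_pos, ne_top_of_le_ne_top hr (measure_mono sdiff_subset)⟩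

local notation "E2" => EuclideanSpace ℝ (Fin 2)

namespace SquareGrid

noncomputable section

def rect (a b c d : ℝ) : Set E2 := {y | y 0 ∈ Ico a b ∧ y 1 ∈ Ico c d}

def cellIndex (R : ℝ) (y : E2) : ℤ × ℤ := (⌊R * y 0⌋, ⌊R * y 1⌋)

def cell (R : ℝ) (p : ℤ × ℤ) : Set E2 := cellIndex R ⁻¹' {p}

def gridPoint (R : ℝ) (p : ℤ × ℤ) : E2 := !₂[p.1 / R, p.2 / R]

def snap (R : ℝ) (y : E2) : E2 := gridPoint R (cellIndex R y)

-- Inside each cell, the left part of relative width `f` at the cell's lower-left corner.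
def gridSet (f : E2 → ℝ) (R : ℝ) : Set E2 := {y | Int.fract (R * y 0) < f (snap R y)}

variable {R : ℝ}

theorem volume_rect (a b c d : ℝ) :
    volume (rect a b c d) = ENNReal.ofReal (b - a) * ENNReal.ofReal (d - c) := by
  have h : rect a b c d = (MeasurableEquiv.toLp 2 (Fin 2 → ℝ)).symm ⁻¹'
      univ.pi (fun i => if i = 0 then Ico a b else Ico c d) := by
    ext y
    simp [rect, Fin.forall_fin_two]
  rw [h, (EuclideanSpace.volume_preserving_symm_measurableEquiv_toLp (Fin 2)).measure_preimage
    (MeasurableSet.univ_pi fun i => by split <;> exact measurableSet_Ico).nullMeasurableSet,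
    volume_pi_pi, Fin.prod_univ_two]
  simp

theorem measureReal_rect {a b c d : ℝ} (hab : a ≤ b) (hcd : c ≤ d) :
    volume.real (rect a b c d) = (b - a) * (d - c) := by
  rw [measureReal_def, volume_rect, ENNReal.toReal_mul, ENNReal.toReal_ofReal (sub_nonneg.2 hab),
    ENNReal.toReal_ofReal (sub_nonneg.2 hcd)]

theorem measurable_cellIndex : Measurable (cellIndex R) := by
  unfold cellIndex; fun_prop

theorem measurableSet_cell (p : ℤ × ℤ) : MeasurableSet (cell R p) :=
  measurable_cellIndex (measurableSet_singleton p)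

theorem pairwise_disjoint_cell : Pairwise (Disjoint on cell R) :=
  fun _ _ hpq => (disjoint_singleton.mpr hpq).preimage _

theorem mem_cell_cellIndex (y : E2) : y ∈ cell R (cellIndex R y) := rfl

theorem measurable_snap : Measurable (snap R) :=
  (measurable_of_countable (gridPoint R)).comp measurable_cellIndex

theorem snap_eq_of_mem_cell {p : ℤ × ℤ} {y : E2} (hy : y ∈ cell R p) :
    snap R y = gridPoint R p :=
  congrArg (gridPoint R) hy

theorem cellIndex_gridPoint (hR : R ≠ 0) (p : ℤ × ℤ) : cellIndex R (gridPoint R p) = p := by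
  simp [cellIndex, gridPoint, mul_div_cancel₀ _ hR]

theorem measurableSet_gridSet {f : E2 → ℝ} (hf : Measurable f) :
    MeasurableSet (gridSet f R) :=
  measurableSet_lt (by fun_prop) (hf.comp measurable_snap)

theorem floor_mul_eq_iff (hR : 0 < R) (k : ℤ) (t : ℝ) :
    ⌊R * t⌋ = k ↔ t ∈ Ico (k / R) ((k + 1) / R) := by
  rw [Int.floor_eq_iff, mem_Ico, div_le_iff₀ hR, lt_div_iff₀ hR, mul_comm t R]

theorem cell_eq_rect (hR : 0 < R) (p : ℤ × ℤ) :
    cell R p = rect (p.1 / R) ((p.1 + 1) / R) (p.2 / R) ((p.2 + 1) / R) := by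
  ext y
  simp only [cell, cellIndex, mem_preimage, mem_singleton_iff, Prod.ext_iff, rect, mem_ofPred_eq,
    floor_mul_eq_iff hR]

theorem volume_cell_lt_top (hR : 0 < R) (p : ℤ × ℤ) : volume (cell R p) < ⊤ := by
  rw [cell_eq_rect hR, volume_rect]
  exact ENNReal.mul_lt_top ENNReal.ofReal_lt_top ENNReal.ofReal_lt_top

theorem gridSet_inter_cell (hR : 0 < R) {f : E2 → ℝ} {p : ℤ × ℤ}
    (hf1 : f (gridPoint R p) ≤ 1) :
    gridSet f R ∩ cell R p =
      rect (p.1 / R) ((p.1 + f (gridPoint R p)) / R) (p.2 / R) ((p.2 + 1) / R) := by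
  ext y
  constructor
  · rintro ⟨hyA, hyp⟩
    rw [gridSet, mem_ofPred_eq, snap_eq_of_mem_cell hyp, ← Int.self_sub_floor,
      show ⌊R * y 0⌋ = p.1 from congrArg Prod.fst hyp] at hyA
    rw [cell_eq_rect hR] at hyp
    exact ⟨⟨hyp.1.1, by rw [lt_div_iff₀ hR]; linarith⟩, hyp.2⟩
  · rintro ⟨⟨h0, h1⟩, hy1⟩
    have hyp : y ∈ cell R p := by
      rw [cell_eq_rect hR]
      exact ⟨⟨h0, h1.trans_le (by gcongr)⟩, hy1⟩
    refine ⟨?_, hyp⟩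
    rw [gridSet, mem_ofPred_eq, snap_eq_of_mem_cell hyp, ← Int.self_sub_floor,
      show ⌊R * y 0⌋ = p.1 from congrArg Prod.fst hyp]
    rw [lt_div_iff₀ hR] at h1
    linarith

theorem setIntegral_cell_indicator_gridSet_sub_eq_zero (hR : 0 < R) {f : E2 → ℝ}
    (hf : Measurable f) {p : ℤ × ℤ} (hf0 : 0 ≤ f (gridPoint R p))
    (hf1 : f (gridPoint R p) ≤ 1) :
    ∫ y in cell R p, ((gridSet f R).indicator 1 y - f (snap R y)) = 0 := by
  have hA := measurableSet_gridSet (R := R) hf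
  have hfin := (volume_cell_lt_top hR p).ne
  have hsnap : ∀ y ∈ cell R p, f (snap R y) = f (gridPoint R p) :=
    fun y hy => congrArg f (snap_eq_of_mem_cell hy)
  have hind : IntegrableOn ((gridSet f R).indicator 1) (cell R p) :=
    (integrableOn_const (C := (1 : ℝ)) hfin).indicator hA
  have hsnap_int : IntegrableOn (fun y => f (snap R y)) (cell R p) :=
    (integrableOn_const hfin).congr_fun (fun y hy => (hsnap y hy).symm) (measurableSet_cell p)
  rw [integral_sub hind hsnap_int,
    integral_indicator_one hA, measureReal_restrict_apply hA, gridSet_inter_cell hR hf1,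
    setIntegral_congr_fun (measurableSet_cell p) hsnap, setIntegral_const, smul_eq_mul,
    cell_eq_rect hR, measureReal_rect (by gcongr; linarith) (by gcongr; linarith),
    measureReal_rect (by gcongr; linarith) (by gcongr; linarith)]
  ring

theorem dist_le_of_mem_cell (hR : 0 < R) {p : ℤ × ℤ} {z w : E2} (hz : z ∈ cell R p)
    (hw : w ∈ cell R p) : dist z w ≤ 2 / R := by
  rw [cell_eq_rect hR] at hz hw
  have hcoord : ∀ {a s t : ℝ}, s ∈ Ico (a / R) ((a + 1) / R) →
      t ∈ Ico (a / R) ((a + 1) / R) → dist s t ≤ 1 / R := fun {a s t} hs ht => by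
    rw [add_div] at hs ht
    rw [Real.dist_eq, abs_sub_le_iff]
    constructor <;> linarith [hs.1, hs.2, ht.1, ht.2]
  have h0 := hcoord hz.1 hw.1
  have h1 := hcoord hz.2 hw.2
  rw [EuclideanSpace.dist_eq, Fin.sum_univ_two, Real.sqrt_le_left (by positivity)]
  calc dist (z 0) (w 0) ^ 2 + dist (z 1) (w 1) ^ 2 ≤ (1 / R) ^ 2 + (1 / R) ^ 2 := by gcongr
    _ ≤ (2 / R) ^ 2 := by ring_nf; gcongr; norm_num

theorem snap_mem_cell (hR : 0 < R) (y : E2) : snap R y ∈ cell R (cellIndex R y) :=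
  cellIndex_gridPoint hR.ne' _

theorem dist_snap_le (hR : 0 < R) (y : E2) : dist (snap R y) y ≤ 2 / R :=
  dist_le_of_mem_cell hR (snap_mem_cell hR y) (mem_cell_cellIndex y)

theorem ball_inter_cell_subset (hR : 0 < R) {x : E2} {r : ℝ} {p : ℤ × ℤ}
    (hp : ¬ cell R p ⊆ ball x r) : ball x r ∩ cell R p ⊆ ball x r \ ball x (r - 2 / R) := by
  obtain ⟨u, hu, hux⟩ := not_subset.mp hp
  rintro y ⟨hy, hyp⟩
  refine ⟨hy, fun hy' => hux ?_⟩
  rw [mem_ball] at hy' ⊢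
  linarith [dist_triangle u y x, dist_le_of_mem_cell hR hu hyp]

theorem norm_measureReal_gridSet_inter_ball_sub_le (hR : 0 < R) {f : E2 → ℝ}
    (hf : Measurable f) (hf0 : ∀ y, 0 ≤ f y) (hf1 : ∀ y, f y ≤ 1) (x : E2) (r : ℝ) :
    ‖volume.real (gridSet f R ∩ ball x r) - ∫ y in ball x r, f (snap R y)‖ ≤
      volume.real (ball x r \ ball x (r - 2 / R)) := by
  have hA := measurableSet_gridSet (R := R) hf
  have hB : volume (ball x r) ≠ ⊤ := measure_ball_lt_top.ne
  have hind_int : IntegrableOn ((gridSet f R).indicator 1) (ball x r) :=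
    (integrableOn_const (C := (1 : ℝ)) hB).indicator hA
  have hsnap_int : IntegrableOn (fun y => f (snap R y)) (ball x r) :=
    Measure.integrableOn_of_bounded (M := 1) hB (hf.comp measurable_snap).aestronglyMeasurable
      (.of_forall fun y => (Real.norm_of_nonneg (hf0 _)).trans_le (hf1 _))
  have hbound : ∀ y, ‖(gridSet f R).indicator 1 y - f (snap R y)‖ ≤ 1 := fun y => by
    rw [Real.norm_eq_abs, abs_le]
    simp only [indicator, Pi.one_apply]
    split_ifs <;> constructor <;> linarith [hf0 (snap R y), hf1 (snap R y)]
  rw [← measureReal_restrict_apply hA, ← integral_indicator_one hA,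
    ← integral_sub hind_int hsnap_int]
  refine (norm_setIntegral_le_of_setIntegral_cell_eq_zero
    (h := fun y => (gridSet f R).indicator 1 y - f (snap R y)) measurableSet_cell
    pairwise_disjoint_cell (fun y => ⟨_, mem_cell_cellIndex y⟩)
    (((measurable_const.indicator hA).sub (hf.comp measurable_snap)).aestronglyMeasurable)
    hbound hB (ne_top_of_le_ne_top hB (measure_mono sdiff_subset))
    (fun p _ => setIntegral_cell_indicator_gridSet_sub_eq_zero hR hf (hf0 _) (hf1 _))
    (fun p hp => ball_inter_cell_subset hR hp)).trans_eq (one_mul _)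

theorem tendsto_setIntegral_comp_snap {f : E2 → ℝ} (hf : Continuous f) {C : ℝ}
    (hC : ∀ y, ‖f y‖ ≤ C) {s : Set E2} (hs : volume s ≠ ⊤) {R : ℕ → ℝ}
    (hR : Tendsto R atTop atTop) :
    Tendsto (fun j => ∫ y in s, f (snap (R j) y)) atTop (𝓝 (∫ y in s, f y)) := by
  refine tendsto_integral_of_dominated_convergence (fun _ => C)
    (fun j => (hf.measurable.comp measurable_snap).aestronglyMeasurable) (integrableOn_const hs)
    (fun j => .of_forall fun y => hC _) (.of_forall fun y => ?_)
  refine (hf.tendsto y).comp (tendsto_iff_dist_tendsto_zero.mpr ?_)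
  exact squeeze_zero' (.of_forall fun j => dist_nonneg)
    ((hR.eventually_gt_atTop 0).mono fun j hj => dist_snap_le hj y)
    (tendsto_const_nhds.div_atTop hR)

theorem tendsto_measureReal_gridSet_inter_ball {f : E2 → ℝ} (hf : Continuous f)
    (hf0 : ∀ y, 0 ≤ f y) (hf1 : ∀ y, f y ≤ 1) {R : ℕ → ℝ} (hR : Tendsto R atTop atTop)
    (x : E2) (r : ℝ) :
    Tendsto (fun j => volume.real (gridSet f (R j) ∩ ball x r)) atTop
      (𝓝 (∫ y in ball x r, f y)) := by
  have hR_pos : ∀ᶠ j in atTop, 0 < R j := hR.eventually_gt_atTop 0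
  have hsnap := tendsto_setIntegral_comp_snap hf (C := 1) (s := ball x r)
    (fun y => (Real.norm_of_nonneg (hf0 y)).trans_le (hf1 y))
    measure_ball_lt_top.ne hR
  have hmesh : Tendsto (fun j => 2 / R j) atTop (𝓝[>] 0) :=
    tendsto_nhdsWithin_of_tendsto_nhds_of_eventually_within _
      (tendsto_const_nhds.div_atTop hR) (hR_pos.mono fun j hj => div_pos two_pos hj)
  have hboundary :
      Tendsto (fun j => volume.real (ball x r \ ball x (r - 2 / R j))) atTop (𝓝 0) := by
    simpa [Function.comp_def, measureReal_def] using
      (ENNReal.tendsto_toReal ENNReal.zero_ne_top).comp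
        ((tendsto_measure_ball_sdiff_ball x measure_ball_lt_top.ne).comp hmesh)
  have herror := squeeze_zero_norm' (hR_pos.mono fun j hj =>
    norm_measureReal_gridSet_inter_ball_sub_le hj hf.measurable hf0 hf1 x r) hboundary
  simpa using herror.add hsnap

end

end SquareGrid

/-- For every continuous `ξ : [0,∞) → (-1,1)` there exists a sequence of measurable sets
`A_j ⊆ ℝ²` whose volumes on every ball converge to the integral of the density
`(1 + ξ(‖y‖))/2`. -/
theorem stmt15 (ξ : ℝ → ℝ) (hcont : ContinuousOn ξ (Set.Ici 0))
    (hrange : ∀ ρ : ℝ, 0 ≤ ρ → ξ ρ ∈ Set.Ioo (-1 : ℝ) 1) :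
    ∃ A : ℕ → Set (EuclideanSpace ℝ (Fin 2)),
      (∀ j, MeasurableSet (A j)) ∧
      ∀ (x : EuclideanSpace ℝ (Fin 2)) (r : ℝ), 0 < r →
        Filter.Tendsto (fun j => (volume (A j ∩ Metric.ball x r)).toReal) Filter.atTop
          (nhds (∫ y in Metric.ball x r, (1 + ξ ‖y‖) / 2)) := by
  set f : EuclideanSpace ℝ (Fin 2) → ℝ := fun y => (1 + ξ ‖y‖) / 2
  have hf : Continuous f :=
    (continuous_const.add (hcont.comp_continuous continuous_norm norm_nonneg)).div_const 2
  have hf0 : ∀ y, 0 ≤ f y := fun y => by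
    simp only [f]; linarith [(hrange ‖y‖ (norm_nonneg y)).1]
  have hf1 : ∀ y, f y ≤ 1 := fun y => by
    simp only [f]; linarith [(hrange ‖y‖ (norm_nonneg y)).2]
  exact ⟨fun j => SquareGrid.gridSet f (j + 1),
    fun j => SquareGrid.measurableSet_gridSet hf.measurable,
    fun x r _ => SquareGrid.tendsto_measureReal_gridSet_inter_ball hf hf0 hf1
      (tendsto_atTop_add_const_right _ 1 tendsto_natCast_atTop_atTop) x r⟩
end

section
/- Define p(a) = cos(‖a‖ + γ) on ℝ^d for a fixed phase γ ∈ ℝ. Then for every u ∈ (-1,1), as R → ∞, (1/|B_R(0)|)·∫_{B_R(0)} sgn(p(a) - u) da → 2·arccos(u)/π - 1, uniformly in u on compact subsets of (-1,1). In particular, the limit is 0 when u = 0. -/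
/-!
In polar coordinates the average of a radial function `f ‖a‖` over `B_R(0) ⊆ ℝᵈ` is
`(d / Rᵈ) ∫₀ᴿ rᵈ⁻¹ f r dr`. The function `r ↦ sgn (cos (r + γ) - u)` is `2π`-periodic with mean
`2 arccos u / π - 1`, since on each period the set where `cos ≥ u` has length `2 arccos u`.
Against a nonnegative nondecreasing weight `w`, a periodic function `g` of mean zero with `|g| ≤ M`
satisfies `|∫₀ᴿ w g| ≤ 2 M T w(R)`: on each period `[a, a + T]` the weight may be replaced by
`w - w a ≥ 0`, and these increments telescope. For `w r = rᵈ⁻¹` this bounds the error by `8πd/R`,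
uniformly in `u ∈ [-1, 1]`.
-/

open MeasureTheory Real Set Metric Filter Module

lemma IntervalIntegrable.mul_of_abs_le {f g : ℝ → ℝ} {a b M : ℝ}
    (hf : IntervalIntegrable f volume a b) (hgm : AEStronglyMeasurable g volume)
    (hgM : ∀ x, |g x| ≤ M) : IntervalIntegrable (fun x => f x * g x) volume a b := by
  rw [intervalIntegrable_iff] at hf ⊢
  exact hf.mul_bdd hgm.restrict (Eventually.of_forall hgM)

section WeightedPeriodic

variable {g w : ℝ → ℝ} {T M : ℝ}

lemma intervalIntegrable_mul_of_monotoneOn (hw : MonotoneOn w (Ici 0))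
    (hgm : AEStronglyMeasurable g volume) (hgM : ∀ x, |g x| ≤ M) {a b : ℝ} (ha : 0 ≤ a)
    (hb : 0 ≤ b) : IntervalIntegrable (fun x => w x * g x) volume a b :=
  (hw.mono fun _ hx => (le_min ha hb).trans hx.1 : MonotoneOn w (uIcc a b)).intervalIntegrable
    |>.mul_of_abs_le hgm hgM

lemma abs_integral_mul_periodic_period_le (hT : 0 ≤ T) (hg : Function.Periodic g T)
    (hg0 : ∫ x in 0..T, g x = 0) (hgm : AEStronglyMeasurable g volume) (hgM : ∀ x, |g x| ≤ M)
    (hw : MonotoneOn w (Ici 0)) {a : ℝ} (ha : 0 ≤ a) :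
    |∫ x in a..a + T, w x * g x| ≤ M * T * (w (a + T) - w a) := by
  have haT : a ≤ a + T := le_add_of_nonneg_right hT
  have hmean : ∫ x in a..a + T, g x = 0 := by rw [hg.intervalIntegral_add_eq a 0, zero_add, hg0]
  have hshift : ∫ x in a..a + T, w x * g x = ∫ x in a..a + T, (w x - w a) * g x := by
    simp_rw [sub_mul]
    rw [intervalIntegral.integral_sub (intervalIntegrable_mul_of_monotoneOn hw hgm hgM ha
      (ha.trans haT)) (intervalIntegrable_const.mul_of_abs_le hgm hgM),
      intervalIntegral.integral_const_mul, hmean, mul_zero, sub_zero]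
  rw [hshift, ← Real.norm_eq_abs]
  refine (intervalIntegral.norm_integral_le_of_norm_le_const (C := (w (a + T) - w a) * M)
    fun x hx => ?_).trans_eq ?_
  · rw [uIoc_of_le haT] at hx
    have hwx : 0 ≤ w x - w a := sub_nonneg.2 (hw ha (ha.trans hx.1.le) hx.1.le)
    have hwx' : w x - w a ≤ w (a + T) - w a :=
      sub_le_sub_right (hw (ha.trans hx.1.le) (ha.trans haT) hx.2) _
    rw [norm_mul, Real.norm_eq_abs, Real.norm_eq_abs, abs_of_nonneg hwx]
    exact mul_le_mul hwx' (hgM x) (abs_nonneg _) (hwx.trans hwx')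
  · rw [add_sub_cancel_left, abs_of_nonneg hT]
    ring

lemma abs_integral_mul_periodic_nat_mul_le (hT : 0 ≤ T) (hg : Function.Periodic g T)
    (hg0 : ∫ x in 0..T, g x = 0) (hgm : AEStronglyMeasurable g volume) (hgM : ∀ x, |g x| ≤ M)
    (hw : MonotoneOn w (Ici 0)) (n : ℕ) :
    |∫ x in 0..n * T, w x * g x| ≤ M * T * (w (n * T) - w 0) := by
  induction n with
  | zero => simp
  | succ n ih =>
    have hnT : 0 ≤ n * T := by positivity
    rw [Nat.cast_succ, add_one_mul, ← intervalIntegral.integral_add_adjacent_intervals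
      (intervalIntegrable_mul_of_monotoneOn hw hgm hgM le_rfl hnT)
      (intervalIntegrable_mul_of_monotoneOn hw hgm hgM hnT (by positivity))]
    calc _ ≤ _ := abs_add_le _ _
      _ ≤ M * T * (w (n * T) - w 0) + M * T * (w (n * T + T) - w (n * T)) :=
        add_le_add ih (abs_integral_mul_periodic_period_le hT hg hg0 hgm hgM hw hnT)
      _ = M * T * (w (n * T + T) - w 0) := by ring

theorem abs_integral_mul_periodic_le (hT : 0 < T) (hg : Function.Periodic g T)
    (hg0 : ∫ x in 0..T, g x = 0) (hgm : AEStronglyMeasurable g volume) (hgM : ∀ x, |g x| ≤ M)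
    (hw : MonotoneOn w (Ici 0)) (hw0 : 0 ≤ w 0) {R : ℝ} (hR : 0 ≤ R) :
    |∫ x in 0..R, w x * g x| ≤ 2 * M * T * w R := by
  set n := ⌊R / T⌋₊
  have hnT : 0 ≤ n * T := by positivity
  have hnR : n * T ≤ R := (le_div_iff₀ hT).1 (Nat.floor_le (div_nonneg hR hT.le))
  have hRn : R - n * T ≤ T := by
    have := (div_lt_iff₀ hT).1 (Nat.lt_floor_add_one (R / T))
    linarith
  have hM : 0 ≤ M := (abs_nonneg _).trans (hgM 0)
  have hwR : 0 ≤ w R := hw0.trans (hw self_mem_Ici hR hR)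
  have htail : |∫ x in n * T..R, w x * g x| ≤ M * T * w R := by
    rw [← Real.norm_eq_abs]
    refine (intervalIntegral.norm_integral_le_of_norm_le_const (C := w R * M)
      fun x hx => ?_).trans ?_
    · rw [uIoc_of_le hnR] at hx
      have hx0 : 0 ≤ x := hnT.trans hx.1.le
      rw [norm_mul, Real.norm_eq_abs, Real.norm_eq_abs,
        abs_of_nonneg (hw0.trans (hw self_mem_Ici hx0 hx0))]
      exact mul_le_mul (hw hx0 hR hx.2) (hgM x) (abs_nonneg _) hwR
    · rw [abs_of_nonneg (sub_nonneg.2 hnR)]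
      calc w R * M * (R - n * T) ≤ w R * M * T :=
            mul_le_mul_of_nonneg_left hRn (mul_nonneg hwR hM)
        _ = M * T * w R := by ring
  rw [← intervalIntegral.integral_add_adjacent_intervals
    (intervalIntegrable_mul_of_monotoneOn hw hgm hgM le_rfl hnT)
    (intervalIntegrable_mul_of_monotoneOn hw hgm hgM hnT hR)]
  calc _ ≤ _ := abs_add_le _ _
    _ ≤ M * T * (w (n * T) - w 0) + M * T * w R :=
      add_le_add (abs_integral_mul_periodic_nat_mul_le hT.le hg hg0 hgm hgM hw n) htail
    _ ≤ 2 * M * T * w R := by nlinarith [hw hnT hR hnR, mul_nonneg hM hT.le]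

end WeightedPeriodic

lemma le_cos_iff_le_arccos {u x : ℝ} (hu : u ∈ Icc (-1) 1) (hx : x ∈ Icc 0 π) :
    u ≤ cos x ↔ x ≤ arccos u := by
  conv_lhs => rw [← cos_arccos hu.1 hu.2]
  exact strictAntiOn_cos.le_iff_ge ⟨arccos_nonneg u, arccos_le_pi u⟩ hx

noncomputable def sgnCosSub (γ u r : ℝ) : ℝ := if 0 ≤ cos (r + γ) - u then 1 else -1

lemma measurable_sgnCosSub (γ u : ℝ) : Measurable (sgnCosSub γ u) :=
  Measurable.ite (measurableSet_le measurable_const (by fun_prop)) measurable_const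
    measurable_const

lemma abs_sgnCosSub (γ u r : ℝ) : |sgnCosSub γ u r| = 1 := by
  unfold sgnCosSub; split_ifs <;> simp

lemma intervalIntegrable_sgnCosSub (γ u a b : ℝ) :
    IntervalIntegrable (sgnCosSub γ u) volume a b :=
  (intervalIntegrable_const (c := (1 : ℝ))).mono_fun
    (measurable_sgnCosSub γ u).aestronglyMeasurable
    (ae_of_all _ fun r => by simp [abs_sgnCosSub])

lemma periodic_sgnCosSub (γ u : ℝ) : Function.Periodic (sgnCosSub γ u) (2 * π) := fun r => by
  simp only [sgnCosSub, add_right_comm r (2 * π), cos_add_two_pi]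

lemma integral_sgnCosSub_zero_neg_pi_pi {u : ℝ} (hu : u ∈ Icc (-1) 1) :
    ∫ x in -π..π, sgnCosSub 0 u x = 4 * arccos u - 2 * π := by
  have hα : arccos u ∈ Icc 0 π := ⟨arccos_nonneg u, arccos_le_pi u⟩
  have hint := intervalIntegrable_sgnCosSub 0 u
  have heven : ∫ x in -π..0, sgnCosSub 0 u x = ∫ x in 0..π, sgnCosSub 0 u x := by
    simpa [sgnCosSub] using (intervalIntegral.integral_comp_neg (a := 0) (b := π)
      (sgnCosSub 0 u)).symm
  have hleft : ∫ x in 0..arccos u, sgnCosSub 0 u x = arccos u := by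
    rw [intervalIntegral.integral_congr (g := fun _ => 1) fun x hx => ?_]
    · simp
    rw [uIcc_of_le hα.1] at hx
    simp [sgnCosSub, (le_cos_iff_le_arccos hu ⟨hx.1, hx.2.trans hα.2⟩).2 hx.2]
  have hright : ∫ x in arccos u..π, sgnCosSub 0 u x = -(π - arccos u) := by
    rw [intervalIntegral.integral_congr_ae (g := fun _ => -1) (ae_of_all _ fun x hx => ?_)]
    · simp
    rw [uIoc_of_le hα.2] at hx
    simp [sgnCosSub, (le_cos_iff_le_arccos hu ⟨hα.1.trans hx.1.le, hx.2⟩).not.2 (not_le.2 hx.1)]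
  rw [← intervalIntegral.integral_add_adjacent_intervals (hint _ 0) (hint 0 _), heven,
    ← intervalIntegral.integral_add_adjacent_intervals (hint 0 (arccos u)) (hint _ π),
    hleft, hright]
  ring

lemma integral_sgnCosSub_period (γ : ℝ) {u : ℝ} (hu : u ∈ Icc (-1) 1) :
    ∫ r in 0..2 * π, sgnCosSub γ u r = 4 * arccos u - 2 * π := by
  have hshift : ∀ r, sgnCosSub γ u r = sgnCosSub 0 u (r + γ) := fun r => by simp [sgnCosSub]
  rw [← zero_add (2 * π), (periodic_sgnCosSub γ u).intervalIntegral_add_eq 0 (-π - γ),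
    funext hshift, intervalIntegral.integral_comp_add_right (sgnCosSub 0 u) γ]
  convert integral_sgnCosSub_zero_neg_pi_pi hu using 2 <;> ring

lemma abs_two_mul_arccos_div_pi_sub_one_le (u : ℝ) : |2 * arccos u / π - 1| ≤ 1 := by
  have h0 : 0 ≤ arccos u / π := div_nonneg (arccos_nonneg u) pi_pos.le
  have h1 : arccos u / π ≤ 1 := (div_le_one pi_pos).2 (arccos_le_pi u)
  rw [mul_div_assoc, abs_le]
  constructor <;> linarith

section RadialAverage

variable {E : Type*} [NormedAddCommGroup E] [NormedSpace ℝ E] [FiniteDimensional ℝ E]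
  [Nontrivial E] [MeasurableSpace E] [BorelSpace E] (μ : Measure E) [μ.IsAddHaarMeasure]

theorem setIntegral_ball_fun_norm (f : ℝ → ℝ) {R : ℝ} (hR : 0 ≤ R) :
    ∫ x in ball (0 : E) R, f ‖x‖ ∂μ =
      finrank ℝ E * μ.real (ball 0 1) * ∫ r in 0..R, r ^ (finrank ℝ E - 1) * f r := by
  have hball : ∀ x : E,
      (ball (0 : E) R).indicator (fun x => f ‖x‖) x = (Iio R).indicator f ‖x‖ :=
    fun x => by by_cases h : ‖x‖ < R <;> simp [h]
  have hIoi : ∀ r : ℝ, r ^ (finrank ℝ E - 1) • (Iio R).indicator f r =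
      (Iio R).indicator (fun r => r ^ (finrank ℝ E - 1) * f r) r :=
    fun r => by by_cases h : r < R <;> simp [h]
  rw [← MeasureTheory.integral_indicator measurableSet_ball, funext hball,
    integral_fun_norm_addHaar, funext hIoi, setIntegral_indicator measurableSet_Iio, Ioi_inter_Iio,
    ← integral_Ioc_eq_integral_Ioo, ← intervalIntegral.integral_of_le hR, nsmul_eq_mul,
    smul_eq_mul, mul_assoc]

theorem measure_ball_inv_mul_setIntegral_fun_norm (f : ℝ → ℝ) {R : ℝ} (hR : 0 < R) :
    (μ (ball 0 R)).toReal⁻¹ * ∫ x in ball (0 : E) R, f ‖x‖ ∂μ =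
      finrank ℝ E / R ^ finrank ℝ E * ∫ r in 0..R, r ^ (finrank ℝ E - 1) * f r := by
  have hB : μ.real (ball (0 : E) 1) ≠ 0 :=
    (ENNReal.toReal_pos (measure_ball_pos μ 0 one_pos).ne' measure_ball_lt_top.ne).ne'
  rw [setIntegral_ball_fun_norm μ f hR.le, Measure.addHaar_ball μ 0 hR.le, ENNReal.toReal_mul,
    ENNReal.toReal_ofReal (by positivity), ← measureReal_def]
  field_simp

theorem abs_average_sgnCosSub_sub_le (γ : ℝ) {u : ℝ} (hu : u ∈ Icc (-1) 1) {R : ℝ}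
    (hR : 0 < R) :
    |(μ (ball 0 R)).toReal⁻¹ * ∫ x in ball (0 : E) R, sgnCosSub γ u ‖x‖ ∂μ
      - (2 * arccos u / π - 1)| ≤ 8 * π * finrank ℝ E / R := by
  set L := 2 * arccos u / π - 1
  obtain ⟨k, hk⟩ : ∃ k, finrank ℝ E = k + 1 := Nat.exists_eq_succ_of_ne_zero finrank_pos.ne'
  have hg0 : ∫ r in 0..2 * π, (sgnCosSub γ u r - L) = 0 := by
    rw [intervalIntegral.integral_sub (intervalIntegrable_sgnCosSub γ u 0 _)
      intervalIntegrable_const, integral_sgnCosSub_period γ hu, intervalIntegral.integral_const]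
    simp only [L, smul_eq_mul]
    field_simp
    ring
  have hgM : ∀ r, |sgnCosSub γ u r - L| ≤ 2 := fun r => by
    linarith [abs_sub (sgnCosSub γ u r) L, abs_sgnCosSub γ u r,
      abs_two_mul_arccos_div_pi_sub_one_le u]
  have hweighted := abs_integral_mul_periodic_le two_pi_pos
    (g := fun r => sgnCosSub γ u r - L) (fun r => by simp only [periodic_sgnCosSub γ u r]) hg0
    ((measurable_sgnCosSub γ u).sub_const L).aestronglyMeasurable hgM
    (w := fun r => r ^ k) (fun a ha _ _ hab => pow_le_pow_left₀ ha hab k) (by positivity) hR.le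
  have hsub : (k + 1) / R ^ (k + 1) * (∫ r in 0..R, r ^ k * sgnCosSub γ u r) - L =
      (k + 1) / R ^ (k + 1) * ∫ r in 0..R, r ^ k * (sgnCosSub γ u r - L) := by
    simp_rw [mul_sub]
    rw [intervalIntegral.integral_sub
      ((intervalIntegral.intervalIntegrable_pow k).mul_of_abs_le
        (measurable_sgnCosSub γ u).aestronglyMeasurable fun r => (abs_sgnCosSub γ u r).le)
      ((intervalIntegral.intervalIntegrable_pow k).mul_const L),
      intervalIntegral.integral_mul_const, integral_pow]
    field_simp
    ring
  rw [measure_ball_inv_mul_setIntegral_fun_norm μ _ hR, hk, Nat.add_sub_cancel]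
  push_cast
  rw [hsub, abs_mul, abs_of_nonneg (by positivity)]
  calc (k + 1) / R ^ (k + 1) * |∫ r in 0..R, r ^ k * (sgnCosSub γ u r - L)|
      ≤ (k + 1) / R ^ (k + 1) * (2 * 2 * (2 * π) * R ^ k) := by gcongr
    _ = 8 * π * (k + 1) / R := by field_simp; ring

end RadialAverage

/-- For `p(a) = cos(‖a‖ + γ)` on `ℝᵈ` and `u ∈ (-1,1)`, the volume-average of
`sgn(p(a) - u)` over `B_R(0)` converges, as `R → ∞`, to `2 arccos(u)/π - 1`, uniformly in
`u` on compact subsets of `(-1,1)`; in particular the limit is `0` at `u = 0`. -/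
theorem stmt16 (d : ℕ) (hd : 1 ≤ d) (γ : ℝ) :
    let F : ℝ → ℝ → ℝ := fun R u =>
      (volume (Metric.ball (0 : EuclideanSpace ℝ (Fin d)) R)).toReal⁻¹ *
        ∫ a in Metric.ball (0 : EuclideanSpace ℝ (Fin d)) R,
          (if 0 ≤ Real.cos (‖a‖ + γ) - u then (1 : ℝ) else -1)
    (∀ K : Set ℝ, IsCompact K → K ⊆ Set.Ioo (-1 : ℝ) 1 →
      TendstoUniformlyOn F (fun u => 2 * Real.arccos u / Real.pi - 1) Filter.atTop K) ∧
    2 * Real.arccos 0 / Real.pi - 1 = 0 := by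
  intro F
  have : NeZero d := ⟨by omega⟩
  have hbound : ∀ u ∈ Icc (-1 : ℝ) 1, ∀ R > 0,
      |F R u - (2 * arccos u / π - 1)| ≤ 8 * π * d / R := fun u hu R hR => by
    have := abs_average_sgnCosSub_sub_le (volume : Measure (EuclideanSpace ℝ (Fin d))) γ hu hR
    rwa [finrank_euclideanSpace_fin] at this
  have hlim : Tendsto (fun R : ℝ => 8 * π * d / R) atTop (nhds 0) :=
    tendsto_const_nhds.div_atTop tendsto_id
  refine ⟨fun K _ hK => Metric.tendstoUniformlyOn_iff.2 fun ε hε => ?_, ?_⟩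
  · filter_upwards [hlim.eventually (gt_mem_nhds hε), eventually_gt_atTop 0] with R hRε hR u hu
    rw [dist_comm, Real.dist_eq]
    exact (hbound u (Ioo_subset_Icc_self (hK hu)) R hR).trans_lt hRε
  · rw [arccos_zero]
    field_simp
    norm_num
end
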